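/- Let (X,Y) be a centered bivariate Gaussian with Var(X) = σ_x², Var(Y) = σ_y², Cov(X,Y) = ρ, and positive definite covariance matrix, and set Δ = σ_x²σ_y² − ρ². Then for every real s with σ_x²σ_y² > (ρ + sΔ)² (equivalently, 1 − 2ρs − s²Δ > 0), one has E[exp(s·X·Y)] = 1/sqrt(1 − 2ρs − s²Δ). -/

import Mathlib

open MeasureTheory ProbabilityTheory Matrix

/-- The centered Gaussian measure on `ι → ℝ` with covariance matrix `S`,
defined via its density with respect to Lebesgue measure. -/
noncomputable def gaussianOfCov {ι : Type*} [Fintype ι] [DecidableEq ι] (S : Matrix ι ι ℝ) :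
    Measure (ι → ℝ) :=
  (volume : Measure (ι → ℝ)).withDensity fun x =>
    ENNReal.ofReal ((Real.sqrt ((2 * Real.pi) ^ (Fintype.card ι) * S.det))⁻¹ *
      Real.exp (-(x ⬝ᵥ (S⁻¹ *ᵥ x)) / 2))

/-- Kullback–Leibler divergence `∫ log (dP/dQ) dP`. -/
noncomputable def klDiv {E : Type*} [MeasurableSpace E] (P Q : Measure E) : ℝ :=
  ∫ x, MeasureTheory.llr P Q x ∂P

/-- A positive definite covariance matrix is `T`-structured for an undirected
graph `T` if its inverse vanishes off the diagonal outside the edges of `T`. -/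
def TStructured {d : ℕ} (T : SimpleGraph (Fin d)) (S : Matrix (Fin d) (Fin d) ℝ) : Prop :=
  S.PosDef ∧ ∀ j k, j ≠ k → ¬ T.Adj j k → S⁻¹ j k = 0

/-- Infimum of KL divergences from `P` to `T`-structured centered Gaussians. -/
noncomputable def treeKL {d : ℕ} (P : Measure (Fin d → ℝ)) (T : SimpleGraph (Fin d)) : ℝ :=
  sInf {r | ∃ S : Matrix (Fin d) (Fin d) ℝ, TStructured T S ∧
    r = klDiv P (gaussianOfCov S)}

/-- Minimum over trees of `treeKL`. -/
noncomputable def bestTreeKL {d : ℕ} (P : Measure (Fin d → ℝ)) : ℝ :=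
  sInf {r | ∃ T : SimpleGraph (Fin d), T.IsTree ∧ r = treeKL P T}

instance {d : ℕ} : MeasurableSpace (SimpleGraph (Fin d)) := ⊤

/-- Sample covariance matrix. -/
noncomputable def sampleCov {n d : ℕ} (x : Fin n → Fin d → ℝ) :
    Matrix (Fin d) (Fin d) ℝ :=
  fun j k => (1 / (n : ℝ)) * ∑ i, x i j * x i k

/-- `condMatrix S C x y = S x y − S_{xC} S_{CC}⁻¹ S_{Cy}`. -/
noncomputable def condMatrix {d : ℕ} (S : Matrix (Fin d) (Fin d) ℝ)
    (C : Finset (Fin d)) : Matrix (Fin d) (Fin d) ℝ :=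
  fun x y => S x y -
    ∑ a : C, ∑ b : C, S x a * ((Matrix.of fun p q : C => S p q)⁻¹ a b) * S b y

/-- Partial correlation of `j` and `k` given the variables in `C`. -/
noncomputable def pcorr {d : ℕ} (S : Matrix (Fin d) (Fin d) ℝ) (j k : Fin d)
    (C : Finset (Fin d)) : ℝ :=
  condMatrix S C j k / Real.sqrt (condMatrix S C j j * condMatrix S C k k)

/-- The skeleton of a directed graph `E` on `Fin d`. -/
def skeleton {d : ℕ} (E : Fin d → Fin d → Prop) : SimpleGraph (Fin d) where
  Adj j k := j ≠ k ∧ (E j k ∨ E k j)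
  symm := ⟨fun j k h => ⟨h.1.symm, h.2.symm⟩⟩
  loopless := ⟨fun j h => h.1 rfl⟩

/-- A polytree: a DAG whose skeleton is a tree. -/
def IsPolytree {d : ℕ} (E : Fin d → Fin d → Prop) : Prop :=
  (∀ j, ¬ E j j) ∧ (∀ j k, ¬ (E j k ∧ E k j)) ∧ (skeleton E).IsTree

/-- A directed tree: a polytree with a root with no parent and all other
nodes having exactly one parent. -/
def IsDirectedTree {d : ℕ} (E : Fin d → Fin d → Prop) : Prop :=
  IsPolytree E ∧ ∃ r : Fin d, (∀ j, ¬ E j r) ∧ ∀ k, k ≠ r → ∃! j, E j k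

/-- `N(0,Σ)` is Markov to the DAG `E` if `Σ = (I−A)⁻¹ D (I−A)⁻ᵀ` with the
support of `A` contained in the edges of `E`. -/
def MarkovTo {d : ℕ} (S : Matrix (Fin d) (Fin d) ℝ)
    (E : Fin d → Fin d → Prop) : Prop :=
  ∃ (A : Matrix (Fin d) (Fin d) ℝ) (D : Fin d → ℝ),
    (∀ k j, A k j ≠ 0 → E j k) ∧ (∀ k, 0 < D k) ∧
    S = (1 - A)⁻¹ * Matrix.diagonal D * ((1 - A)⁻¹)ᵀ

/-- `c`-strong tree-faithfulness of `N(0,Σ)` to the polytree `E`. -/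
def StrongTreeFaithful {d : ℕ} (c : ℝ) (S : Matrix (Fin d) (Fin d) ℝ)
    (E : Fin d → Fin d → Prop) : Prop :=
  (∀ j k, (skeleton E).Adj j k →
      c ≤ pcorr S j k ∅ ∧ ∀ ℓ, ℓ ≠ j → ℓ ≠ k → c ≤ pcorr S j k {ℓ}) ∧
  (∀ j ℓ k, E j ℓ → E k ℓ → j ≠ k → ¬ (skeleton E).Adj j k →
      c ≤ pcorr S j k {ℓ})

/-! Against the Gaussian density, the factor `exp (s * x 0 * x 1)` only shifts the off-diagonal
entries of the precision matrix `Σ⁻¹` by `-s`. The hypothesis on `s` says that the shifted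
matrix `Q` is still positive definite, and completing the square in one variable gives
`∫ exp (-(x ⬝ᵥ Q *ᵥ x) / 2) = 2π / √(det Q)`. Finally
`det Σ * det Q = 1 - 2ρs - s²Δ`. -/

open Real

lemma integrable_and_integral_exp_neg_mul_sq_add_mul {q : ℝ} (hq : 0 < q) (t : ℝ) :
    Integrable (fun y => exp (-q * y ^ 2 + t * y)) ∧
      ∫ y, exp (-q * y ^ 2 + t * y) = exp (t ^ 2 / (4 * q)) * √(π / q) := by
  have hsq : (fun y => exp (-q * y ^ 2 + t * y)) =
      fun y => exp (t ^ 2 / (4 * q)) * exp (-q * (y - t / (2 * q)) ^ 2) := by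
    ext y
    rw [← exp_add]
    congr 1
    field_simp
    ring
  rw [hsq]
  exact ⟨((integrable_exp_neg_mul_sq hq).comp_sub_right _).const_mul _, by
    rw [integral_const_mul, integral_sub_right_eq_self (fun y => exp (-q * y ^ 2)),
      integral_gaussian]⟩

lemma integrable_and_integral_exp_neg_quadratic_prod {a b c : ℝ} (hc : 0 < c)
    (hdet : b ^ 2 < a * c) :
    Integrable (fun z : ℝ × ℝ =>
        exp (-(a * z.1 ^ 2 + 2 * b * z.1 * z.2 + c * z.2 ^ 2) / 2)) ∧
    ∫ z : ℝ × ℝ, exp (-(a * z.1 ^ 2 + 2 * b * z.1 * z.2 + c * z.2 ^ 2) / 2) =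
      2 * π / √(a * c - b ^ 2) := by
  set f := fun z : ℝ × ℝ => exp (-(a * z.1 ^ 2 + 2 * b * z.1 * z.2 + c * z.2 ^ 2) / 2)
  have hk : 0 < (a * c - b ^ 2) / (2 * c) := by
    apply div_pos <;> linarith
  have hsection (x : ℝ) : Integrable (fun y => f (x, y)) ∧
      ∫ y, f (x, y) = √(2 * π / c) * exp (-((a * c - b ^ 2) / (2 * c)) * x ^ 2) := by
    have hsplit : (fun y => f (x, y)) =
        fun y => exp (-(a / 2) * x ^ 2) * exp (-(c / 2) * y ^ 2 + (-b * x) * y) := by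
      ext y
      simp only [f, ← exp_add]
      ring_nf
    obtain ⟨hint, hval⟩ := integrable_and_integral_exp_neg_mul_sq_add_mul (half_pos hc) (-b * x)
    rw [hsplit]
    refine ⟨hint.const_mul _, ?_⟩
    rw [integral_const_mul, hval, ← mul_assoc, ← exp_add, mul_comm]
    congr 2
    · field_simp
    · field_simp
      ring
  have hint : Integrable f := by
    rw [Measure.volume_eq_prod, integrable_prod_iff (by fun_prop)]
    refine ⟨ae_of_all _ fun x => (hsection x).1, ?_⟩
    have hnorm (z : ℝ × ℝ) : ‖f z‖ = f z := norm_of_nonneg (exp_nonneg _)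
    simp_rw [hnorm, (hsection _).2]
    exact (integrable_exp_neg_mul_sq hk).const_mul _
  refine ⟨hint, ?_⟩
  rw [Measure.volume_eq_prod, integral_prod _ (by rwa [← Measure.volume_eq_prod])]
  change ∫ x, ∫ y, f (x, y) = _
  simp_rw [(hsection _).2]
  have hdet' : a * c - b ^ 2 ≠ 0 := by linarith
  rw [integral_const_mul, integral_gaussian, ← sqrt_mul (by positivity),
    show 2 * π / c * (π / ((a * c - b ^ 2) / (2 * c))) = (2 * π) ^ 2 / (a * c - b ^ 2) by
      field_simp,
    sqrt_div (by positivity), sqrt_sq (by positivity)]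

lemma integral_gaussianOfCov {ι E : Type*} [Fintype ι] [DecidableEq ι] [NormedAddCommGroup E]
    [NormedSpace ℝ E] (S : Matrix ι ι ℝ) (f : (ι → ℝ) → E) :
    ∫ x, f x ∂gaussianOfCov S = ∫ x, ((√((2 * π) ^ Fintype.card ι * S.det))⁻¹ *
      exp (-(x ⬝ᵥ (S⁻¹ *ᵥ x)) / 2)) • f x := by
  rw [gaussianOfCov, integral_withDensity_eq_integral_toReal_smul
    (Continuous.measurable (by fun_prop)).ennreal_ofReal
    (ae_of_all _ fun _ => ENNReal.ofReal_lt_top)]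
  congr with x
  rw [ENNReal.toReal_ofReal (by positivity)]

lemma dotProduct_inv_fin_two_mulVec {K : Type*} [Field K] (a b c d : K) (x : Fin 2 → K) :
    x ⬝ᵥ (!![a, b; c, d]⁻¹ *ᵥ x) =
      (d * x 0 ^ 2 - (b + c) * x 0 * x 1 + a * x 1 ^ 2) / (a * d - b * c) := by
  rw [inv_def, adjugate_fin_two_of, det_fin_two_of, Ring.inverse_eq_inv']
  simp only [dotProduct, mulVec, Matrix.smul_apply, of_apply, cons_val', cons_val_fin_one,
    smul_eq_mul, Fin.sum_univ_two, cons_val_zero, cons_val_one]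
  ring

lemma integral_fin_two_arrow {α E : Type*} [MeasureSpace α] [SigmaFinite (volume : Measure α)]
    [NormedAddCommGroup E] [NormedSpace ℝ E] (f : α × α → E) :
    ∫ x : Fin 2 → α, f (x 0, x 1) = ∫ z, f z :=
  (volume_preserving_finTwoArrow α).integral_comp' f

theorem integral_exp_mul_gaussianOfCov_fin_two {a b c s : ℝ}
    (hpd : (!![a, b; b, c] : Matrix (Fin 2) (Fin 2) ℝ).PosDef)
    (hs : (b + s * (a * c - b ^ 2)) ^ 2 < a * c) :
    ∫ x, exp (s * x 0 * x 1) ∂gaussianOfCov (!![a, b; b, c] : Matrix (Fin 2) (Fin 2) ℝ) =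
      1 / √(1 - 2 * b * s - s ^ 2 * (a * c - b ^ 2)) := by
  have hdet : (!![a, b; b, c] : Matrix (Fin 2) (Fin 2) ℝ).det = a * c - b ^ 2 := by
    rw [det_fin_two_of]; ring
  set Δ := a * c - b ^ 2 with hΔ_def
  set K := 1 - 2 * b * s - s ^ 2 * Δ
  have hΔ : 0 < Δ := hdet ▸ hpd.det_pos
  have ha : 0 < a := by simpa using hpd.diag_pos (i := 0)
  have hKΔ : K * Δ = a * c - (b + s * Δ) ^ 2 := by
    rw [hΔ_def]; ring
  have hK : 0 < K := pos_of_mul_pos_left (by linarith) hΔ.le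
  have hform : c / Δ * (a / Δ) - (-(b / Δ + s)) ^ 2 = K / Δ := by
    field_simp; ring
  have hdensity (x : Fin 2 → ℝ) :
      ((√((2 * π) ^ Fintype.card (Fin 2) *
        (!![a, b; b, c] : Matrix (Fin 2) (Fin 2) ℝ).det))⁻¹ *
        exp (-(x ⬝ᵥ ((!![a, b; b, c] : Matrix (Fin 2) (Fin 2) ℝ)⁻¹ *ᵥ x)) / 2)) •
        exp (s * x 0 * x 1) =
      (2 * π * √Δ)⁻¹ *
        exp (-(c / Δ * x 0 ^ 2 + 2 * -(b / Δ + s) * x 0 * x 1 + a / Δ * x 1 ^ 2) / 2) := by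
    rw [dotProduct_inv_fin_two_mulVec, show a * c - b * b = Δ by ring, hdet, Fintype.card_fin,
      sqrt_mul (by positivity), sqrt_sq (by positivity), smul_eq_mul, mul_assoc, ← exp_add]
    congr 2
    field_simp
    ring
  rw [integral_gaussianOfCov]
  simp_rw [hdensity]
  rw [integral_const_mul, integral_fin_two_arrow (fun z => exp (-(c / Δ * z.1 ^ 2 +
      2 * -(b / Δ + s) * z.1 * z.2 + a / Δ * z.2 ^ 2) / 2)),
    (integrable_and_integral_exp_neg_quadratic_prod (by positivity)
      (by linarith [div_pos hK hΔ])).2,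
    hform, sqrt_div hK.le]
  field_simp

/-- Moment generating function of the product of the coordinates of a centered
bivariate Gaussian: `E[exp(s·X·Y)] = 1/√(1 − 2ρs − s²Δ)` where
`Δ = σ_x²σ_y² − ρ²`. -/
theorem stmt_19 (σx σy ρ s : ℝ)
    (hpd : (!![σx ^ 2, ρ; ρ, σy ^ 2] : Matrix (Fin 2) (Fin 2) ℝ).PosDef)
    (hs : (ρ + s * (σx ^ 2 * σy ^ 2 - ρ ^ 2)) ^ 2 < σx ^ 2 * σy ^ 2) :
    ∫ x, Real.exp (s * x 0 * x 1)
        ∂(gaussianOfCov (!![σx ^ 2, ρ; ρ, σy ^ 2] : Matrix (Fin 2) (Fin 2) ℝ)) =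
      1 / Real.sqrt (1 - 2 * ρ * s - s ^ 2 * (σx ^ 2 * σy ^ 2 - ρ ^ 2)) :=
  integral_exp_mul_gaussianOfCov_fin_two hpd hs
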